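/- Let N ≥ 2, let q₁, …, q_N be pairwise distinct real numbers and p₁, …, p_N arbitrary real numbers. Let L be the N×N real matrix with L_{ii} = p_i and L_{ij} = 1/(q_i − q_j) for i ≠ j, and let K be the N×N real matrix with K_{ij} = 1/(q_i − q_j)² for i ≠ j and K_{ii} = −∑_{n≠i} 1/(q_n − q_i)². Then the commutator LK − KL equals the matrix M with off-diagonal entries M_{ij} = (p_i − p_j)/(q_i − q_j)² for i ≠ j and diagonal entries M_{ii} = 2·∑_{k≠i} 1/(q_i − q_k)³. -/
import Mathlib


open Matrix Finset

/-- For the rational Calogero–Moser Lax matrix `L` and the auxiliary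
matrix `K`, the commutator `L*K - K*L` has off-diagonal entries
`(p_i - p_j)/(q_i - q_j)²` and diagonal entries `2·∑_{k≠i} 1/(q_i - q_k)³`. -/
theorem stmt3 (N : ℕ) (hN : 2 ≤ N) (q p : Fin N → ℝ)
    (hq : Function.Injective q)
    (L K M : Matrix (Fin N) (Fin N) ℝ)
    (hL : ∀ i j, L i j = if i = j then p i else 1 / (q i - q j))
    (hK : ∀ i j, K i j =
      if i = j then -∑ n ∈ Finset.univ.filter (· ≠ i), 1 / (q n - q i) ^ 2
      else 1 / (q i - q j) ^ 2)
    (hM : ∀ i j, M i j =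
      if i = j then 2 * ∑ k ∈ Finset.univ.filter (· ≠ i), 1 / (q i - q k) ^ 3
      else (p i - p j) / (q i - q j) ^ 2) :
    L * K - K * L = M := by
  have hqne : ∀ {a b : Fin N}, a ≠ b → q a - q b ≠ 0 :=
    fun h => sub_ne_zero.mpr (fun e => h (hq e))
  ext i j
  simp only [Matrix.sub_apply, Matrix.mul_apply, hL, hK, hM, Finset.filter_ne']
  rw [← Finset.sum_sub_distrib]
  by_cases hij : i = j
  · subst hij
    rw [← Finset.add_sum_erase _ _ (Finset.mem_univ i), if_pos rfl, if_pos rfl, if_pos rfl]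
    have hE : ∀ x ∈ Finset.univ.erase i,
        (((if i = x then p i else 1 / (q i - q x)) *
            if x = i then -∑ x_1 ∈ Finset.univ.erase x, 1 / (q x_1 - q x) ^ 2 else 1 / (q x - q i) ^ 2) -
          (if i = x then -∑ x ∈ Finset.univ.erase i, 1 / (q x - q i) ^ 2 else 1 / (q i - q x) ^ 2) *
            if x = i then p x else 1 / (q x - q i))
        = 2 * (1 / (q i - q x) ^ 3) := by
      intro x hx
      have hxi : x ≠ i := Finset.ne_of_mem_erase hx
      simp only [if_neg (Ne.symm hxi), if_neg hxi]
      have h1 := hqne hxi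
      have h2 := hqne (Ne.symm hxi)
      field_simp
      ring
    rw [Finset.sum_congr rfl hE, ← Finset.mul_sum]
    ring
  · have hji : j ≠ i := Ne.symm hij
    have hjmem : j ∈ Finset.univ.erase i := Finset.mem_erase.mpr ⟨hji, Finset.mem_univ j⟩
    have himem : i ∈ Finset.univ.erase j := Finset.mem_erase.mpr ⟨hij, Finset.mem_univ i⟩
    rw [← Finset.add_sum_erase _ _ (Finset.mem_univ i),
      ← Finset.add_sum_erase _ _ hjmem,
      ← Finset.add_sum_erase _ _ hjmem,
      ← Finset.add_sum_erase _ _ himem,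
      Finset.erase_right_comm (s := (Finset.univ : Finset (Fin N)))]
    simp only [if_pos rfl, if_neg hij, if_neg hji, if_true]
    have hE : ∀ x ∈ (Finset.univ.erase j).erase i,
        (((if i = x then p i else 1 / (q i - q x)) *
              if x = j then -∑ x_1 ∈ Finset.univ.erase x, 1 / (q x_1 - q x) ^ 2 else 1 / (q x - q j) ^ 2) -
            (if i = x then -(1 / (q j - q i) ^ 2 + ∑ x ∈ (Finset.univ.erase j).erase i, 1 / (q x - q i) ^ 2)
              else 1 / (q i - q x) ^ 2) *
              if x = j then p x else 1 / (q x - q j))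
        = 1 / (q i - q x) * (1 / (q x - q j) ^ 2) - 1 / (q i - q x) ^ 2 * (1 / (q x - q j)) := by
      intro x hx
      have hxi : x ≠ i := Finset.ne_of_mem_erase hx
      have hxj : x ≠ j := Finset.ne_of_mem_erase (Finset.mem_of_mem_erase hx)
      simp only [if_neg (Ne.symm hxi), if_neg hxj]
    rw [Finset.sum_congr rfl hE,
      show q j - q i = -(q i - q j) from by ring, neg_sq]
    have hz : ∑ k ∈ (Finset.univ.erase j).erase i,
        ((1 / (q k - q i) ^ 2) * (1 / (q i - q j)) - (1 / (q i - q j)) * (1 / (q k - q j) ^ 2)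
          + (1 / (q i - q k) * (1 / (q k - q j) ^ 2) - 1 / (q i - q k) ^ 2 * (1 / (q k - q j)))) = 0 := by
      refine Finset.sum_eq_zero fun k hk => ?_
      have hki : k ≠ i := Finset.ne_of_mem_erase hk
      have hkj : k ≠ j := Finset.ne_of_mem_erase (Finset.mem_of_mem_erase hk)
      have h1 := hqne hki
      have h2 := hqne (Ne.symm hki)
      have h3 := hqne hkj
      have h4 := hqne (Ne.symm hkj)
      have h5 := hqne (show i ≠ j from hij)
      field_simp
      ring
    simp only [Finset.sum_add_distrib, Finset.sum_sub_distrib, ← Finset.sum_mul,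
      ← Finset.mul_sum] at hz
    simp only [Finset.sum_sub_distrib]
    linear_combination hz
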